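/- Let x̃(t) = (sin(4t/5), cos(4t/5)) and g(t,x) = ((sin(4t/5) - x₁)³ + x₁) in the second component (i.e. g(t,x) = (0, (sin(4t/5)-x₁)³ + x₁)). Then the Melnikov function M_E(θ) = ∫₀^{5π/2} det[ x̃'(τ), g(τ-θ, x̃(τ)) ] dτ equals (3π/4) sin(8θ/5) - (3π/2) sin(4θ/5), its only zeros on [0, 5π/2) are θ₁ = 0 and θ₂ = 5π/4, and θ₁ = 0 is a zero of exact order 3: M_E'(0) = 0, M_E''(0) = 0, M_E'''(0) = -288π/125 ≠ 0. -/

import Mathlib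

/-!
Substituting `u = 4τ/5` turns `M_E(θ)` into `∫₀^{2π} cos u ((a sin u + b cos u)³ + sin u) du`
with `a = cos φ - 1`, `b = -sin φ`, `φ = 4θ/5`. Over a full period only the moments
`∫ sin² cos² = π/4` and `∫ cos⁴ = 3π/4` survive, giving `(3π/4) b (a² + b²) = (3π/2) sin φ (cos φ - 1)`.
This factorisation locates the zeros, and rewriting it as `(3π/4) sin 2φ - (3π/2) sin φ` makes the
derivatives at `0` immediate.
-/

open Real

/-- The Melnikov function of Example 2:
`M_E(θ) = ∫₀^{5π/2} det[x̃'(τ), g(τ-θ, x̃(τ))] dτ` for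
`x̃(t) = (sin(4t/5), cos(4t/5))`, `g(t,x) = (0, (sin(4t/5) - x₁)³ + x₁)`. -/
noncomputable def MeEx2 (θ : ℝ) : ℝ :=
  ∫ τ in (0:ℝ)..(5 * π / 2),
    ((4 / 5 * Real.cos (4 * τ / 5)) *
        ((Real.sin (4 * (τ - θ) / 5) - Real.sin (4 * τ / 5)) ^ 3 + Real.sin (4 * τ / 5)) -
      (-(4 / 5) * Real.sin (4 * τ / 5)) * 0)

open intervalIntegral

lemma integral_sin_pow_three_mul_cos_zero_two_pi : ∫ u in (0:ℝ)..2 * π, sin u ^ 3 * cos u = 0 := by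
  simpa using integral_sin_pow_mul_cos_pow_odd (a := 0) (b := 2 * π) 3 0

lemma integral_sin_mul_cos_pow_three_zero_two_pi : ∫ u in (0:ℝ)..2 * π, sin u * cos u ^ 3 = 0 := by
  simpa using integral_sin_pow_odd_mul_cos_pow (a := 0) (b := 2 * π) 0 3

lemma integral_sin_sq_mul_cos_sq_zero_two_pi :
    ∫ u in (0:ℝ)..2 * π, sin u ^ 2 * cos u ^ 2 = π / 4 := by
  have h : sin (4 * (2 * π)) = 0 := by
    rw [show 4 * (2 * π) = (8:ℕ) * π by push_cast; ring, sin_nat_mul_pi]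
  simp only [integral_sin_sq_mul_cos_sq, h, mul_zero, sin_zero]
  ring

lemma integral_cos_pow_four_zero_two_pi : ∫ u in (0:ℝ)..2 * π, cos u ^ 4 = 3 * π / 4 := by
  rw [integral_cos_pow, integral_cos_sq, sin_two_pi, sin_zero]
  ring

lemma integral_cos_mul_linear_comb_cube_add_sin (a b : ℝ) :
    ∫ u in (0:ℝ)..2 * π, cos u * ((a * sin u + b * cos u) ^ 3 + sin u) =
      3 * π / 4 * b * (a ^ 2 + b ^ 2) := by
  have hexpand : ∀ u, cos u * ((a * sin u + b * cos u) ^ 3 + sin u) =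
      a ^ 3 * (sin u ^ 3 * cos u) + 3 * a ^ 2 * b * (sin u ^ 2 * cos u ^ 2)
        + 3 * a * b ^ 2 * (sin u * cos u ^ 3) + b ^ 3 * cos u ^ 4 + sin u * cos u := fun u => by
    ring
  simp_rw [hexpand]
  rw [integral_add, integral_add, integral_add, integral_add]
  · simp only [integral_const_mul, integral_sin_pow_three_mul_cos_zero_two_pi,
      integral_sin_sq_mul_cos_sq_zero_two_pi, integral_sin_mul_cos_pow_three_zero_two_pi,
      integral_cos_pow_four_zero_two_pi, integral_sin_mul_cos₁, sin_two_pi, sin_zero]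
    ring
  all_goals exact Continuous.intervalIntegrable (by fun_prop) _ _

lemma integral_cos_mul_sin_sub_cube_add_sin (φ : ℝ) :
    ∫ u in (0:ℝ)..2 * π, cos u * ((sin (u - φ) - sin u) ^ 3 + sin u) =
      3 * π / 2 * sin φ * (cos φ - 1) := by
  have hsub : ∀ u, sin (u - φ) - sin u = (cos φ - 1) * sin u + -sin φ * cos u := fun u => by
    rw [sin_sub]; ring
  simp_rw [hsub, integral_cos_mul_linear_comb_cube_add_sin]
  linear_combination (-(3 * π / 4) * sin φ) * sin_sq_add_cos_sq φ

lemma MeEx2_eq_integral_two_pi (θ : ℝ) :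
    MeEx2 θ = ∫ u in (0:ℝ)..2 * π, cos u * ((sin (u - 4 * θ / 5) - sin u) ^ 3 + sin u) := by
  have h := smul_integral_comp_mul_left
    (fun u => cos u * ((sin (u - 4 * θ / 5) - sin u) ^ 3 + sin u)) (4 / 5) (a := 0) (b := 5 * π / 2)
  rw [show (4 / 5 : ℝ) * 0 = 0 by ring, show (4 / 5 : ℝ) * (5 * π / 2) = 2 * π by ring] at h
  rw [← h, MeEx2, smul_eq_mul, ← integral_const_mul]
  congr 1
  ext τ
  ring_nf

lemma MeEx2_eq_sin_mul_cos_sub_one (θ : ℝ) :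
    MeEx2 θ = 3 * π / 2 * sin (4 * θ / 5) * (cos (4 * θ / 5) - 1) := by
  rw [MeEx2_eq_integral_two_pi, integral_cos_mul_sin_sub_cube_add_sin]

lemma sin_eq_zero_iff_of_mem_Ico {x : ℝ} (hx : x ∈ Set.Ico 0 (2 * π)) :
    sin x = 0 ↔ x = 0 ∨ x = π := by
  refine ⟨fun h => ?_, by rintro (rfl | rfl) <;> simp⟩
  obtain ⟨hx0, hx2π⟩ := hx
  rcases lt_or_ge x π with hxπ | hπx
  · exact .inl ((sin_eq_zero_iff_of_lt_of_lt (by linarith [pi_pos]) hxπ).mp h)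
  · have hshift : sin (x - π) = 0 := by rw [sin_sub_pi, h, neg_zero]
    exact .inr (sub_eq_zero.mp
      ((sin_eq_zero_iff_of_lt_of_lt (by linarith [pi_pos]) (by linarith)).mp hshift))

lemma sin_mul_cos_sub_one_eq_zero_iff (x : ℝ) : sin x * (cos x - 1) = 0 ↔ sin x = 0 := by
  rw [mul_eq_zero, sub_eq_zero]
  exact ⟨fun h => h.elim id fun hcos => sin_eq_zero_iff_cos_eq.mpr (.inl hcos), .inl⟩

lemma MeEx2_eq_zero_iff {θ : ℝ} (hθ : θ ∈ Set.Ico 0 (5 * π / 2)) :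
    MeEx2 θ = 0 ↔ θ = 0 ∨ θ = 5 * π / 4 := by
  have hφ : 4 * θ / 5 ∈ Set.Ico 0 (2 * π) := ⟨by linarith [hθ.1], by linarith [hθ.2]⟩
  rw [MeEx2_eq_sin_mul_cos_sub_one, mul_assoc, mul_eq_zero, or_iff_right (by positivity),
    sin_mul_cos_sub_one_eq_zero_iff, sin_eq_zero_iff_of_mem_Ico hφ]
  constructor <;> rintro (h | h) <;> [left; right; left; right] <;> linarith

lemma deriv_sin_comb (A B p q : ℝ) :
    deriv (fun x => A * sin (p * x) + B * sin (q * x)) =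
      fun x => A * p * cos (p * x) + B * q * cos (q * x) := by
  ext x
  have hp := ((hasDerivAt_id x).const_mul p).sin.const_mul A
  have hq := ((hasDerivAt_id x).const_mul q).sin.const_mul B
  refine (hp.add hq).deriv.trans ?_
  simp only [id]
  ring

lemma deriv_cos_comb (A B p q : ℝ) :
    deriv (fun x => A * cos (p * x) + B * cos (q * x)) =
      fun x => -(A * p) * sin (p * x) + -(B * q) * sin (q * x) := by
  ext x
  have hp := ((hasDerivAt_id x).const_mul p).cos.const_mul A
  have hq := ((hasDerivAt_id x).const_mul q).cos.const_mul B
  refine (hp.add hq).deriv.trans ?_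
  simp only [id]
  ring

lemma MeEx2_eq_sin_comb :
    MeEx2 = fun θ => 3 * π / 4 * sin (8 / 5 * θ) + -(3 * π / 2) * sin (4 / 5 * θ) := by
  ext θ
  rw [MeEx2_eq_sin_mul_cos_sub_one, show 8 / 5 * θ = 2 * (4 * θ / 5) by ring, sin_two_mul]
  ring_nf

/-- `M_E(θ) = (3π/4) sin(8θ/5) - (3π/2) sin(4θ/5)`, its only zeros on `[0, 5π/2)` are
`0` and `5π/4`, and `0` is a zero of exact order 3:
`M_E'(0) = 0`, `M_E''(0) = 0`, `M_E'''(0) = -288π/125 ≠ 0`. -/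
theorem melnikov_cubic_zero_example :
    (∀ θ : ℝ, MeEx2 θ = 3 * π / 4 * Real.sin (8 * θ / 5) - 3 * π / 2 * Real.sin (4 * θ / 5)) ∧
    (∀ θ ∈ Set.Ico (0:ℝ) (5 * π / 2), (MeEx2 θ = 0 ↔ θ = 0 ∨ θ = 5 * π / 4)) ∧
    deriv MeEx2 0 = 0 ∧
    deriv (deriv MeEx2) 0 = 0 ∧
    deriv (deriv (deriv MeEx2)) 0 = -(288 * π / 125) ∧
    -(288 * π / 125) ≠ (0:ℝ) := by
  refine ⟨fun θ => ?_, fun θ => MeEx2_eq_zero_iff, ?_, ?_, ?_, neg_ne_zero.mpr (by positivity)⟩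
  · rw [MeEx2_eq_sin_comb]
    ring_nf
  all_goals
    simp only [MeEx2_eq_sin_comb, deriv_sin_comb, deriv_cos_comb, mul_zero, sin_zero, cos_zero]
    ring
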